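/- Positivity of the magnetization: let H₀ and M be n×n Hermitian complex matrices, and suppose there exists a unitary n×n matrix V with V·H₀·V* = H₀ and V·M·V* = −M. Then for every real β ≥ 0 and every real h ≥ 0, the Gibbs expectation of M in the field h is nonnegative: Tr(M · exp(−β(H₀ − hM))) ≥ 0. -/

import Mathlib

open scoped Matrix
open NormedSpace

/-!
Put `X = -β (H₀ - h M)`. Conjugation by `V` turns `X` into `X - 2βh M` and leaves the partition
function `Tr e^X` unchanged, so Klein's inequality `Tr ((B - A) e^A) ≤ Tr e^B - Tr e^A`, applied
to `A = X` and `B = V X V*`, gives `2βh Tr (M e^X) ≥ 0`. If `βh = 0`, conjugation by `V` fixes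
`X` and reverses `M`, so `Tr (M e^X) = -Tr (M e^X) = 0`.
-/

theorem Real.sub_mul_exp_le_exp_sub_exp (a b : ℝ) :
    (b - a) * Real.exp a ≤ Real.exp b - Real.exp a := by
  have h := mul_le_mul_of_nonneg_right (Real.add_one_le_exp (b - a)) (Real.exp_pos a).le
  rwa [← Real.exp_add, sub_add_cancel, add_one_mul, ← le_sub_iff_add_le] at h

namespace Matrix

variable {ι 𝕜 : Type*} [Fintype ι] [DecidableEq ι] [RCLike 𝕜]

theorem trace_unitary_conj {U : Matrix ι ι 𝕜} (hU : U ∈ unitaryGroup ι 𝕜) (A : Matrix ι ι 𝕜) :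
    (U * A * Uᴴ).trace = A.trace := by
  rw [trace_mul_cycle, ← star_eq_conjTranspose, mem_unitaryGroup_iff'.mp hU, one_mul]

theorem exp_unitary_conj {U : Matrix ι ι 𝕜} (hU : U ∈ unitaryGroup ι 𝕜) (A : Matrix ι ι 𝕜) :
    exp (U * A * Uᴴ) = U * exp A * Uᴴ := by
  have hinv : U⁻¹ = Uᴴ := inv_eq_right_inv (mem_unitaryGroup_iff.mp hU)
  rw [← hinv]
  exact exp_conj U A (IsUnit.of_mul_eq_one _ (mem_unitaryGroup_iff.mp hU))

theorem trace_mul_exp_unitary_conj {U : Matrix ι ι 𝕜} (hU : U ∈ unitaryGroup ι 𝕜)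
    (A X : Matrix ι ι 𝕜) : (U * A * Uᴴ * exp (U * X * Uᴴ)).trace = (A * exp X).trace := by
  have hUU : Uᴴ * U = 1 := mem_unitaryGroup_iff'.mp hU
  rw [exp_unitary_conj hU, ← trace_unitary_conj hU (A * exp X)]
  simp only [mul_assoc]
  rw [← mul_assoc Uᴴ U, hUU, one_mul]

theorem exp_diagonal_ofReal (d : ι → ℝ) :
    exp (diagonal fun i => (d i : 𝕜)) = diagonal fun i => (Real.exp (d i) : 𝕜) := by
  rw [exp_diagonal]
  congr 1
  funext i
  rw [Pi.coe_exp, Real.exp_eq_exp_ℝ]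
  exact (algebraMap_exp_comm (d i)).symm

theorem trace_diagonal_mul_mul_diagonal_mul_conjTranspose (S : Matrix ι ι 𝕜) (d e : ι → ℝ) :
    (diagonal (fun i => (d i : 𝕜)) * (S * diagonal (fun j => (e j : 𝕜)) * Sᴴ)).trace =
      ((∑ i, ∑ j, d i * e j * ‖S i j‖ ^ 2 : ℝ) : 𝕜) := by
  simp only [trace, diag, diagonal_mul, mul_apply (M := S * _), mul_diagonal, conjTranspose_apply,
    Finset.mul_sum, RCLike.ofReal_sum, RCLike.ofReal_mul, RCLike.ofReal_pow, ← RCLike.mul_conj,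
    RCLike.star_def]
  refine Finset.sum_congr rfl fun i _ => Finset.sum_congr rfl fun j _ => ?_
  ring

namespace IsHermitian

variable {A B : Matrix ι ι 𝕜}

theorem exp_eq_cfc (hA : A.IsHermitian) : NormedSpace.exp A = cfc Real.exp A := by
  conv_lhs => rw [hA.spectral_theorem]
  rw [hA.cfc_eq, IsHermitian.cfc, Unitary.conjStarAlgAut_apply, Unitary.conjStarAlgAut_apply,
    star_eq_conjTranspose, exp_unitary_conj (SetLike.coe_mem _)]
  exact congrArg (_ * · * _) (exp_diagonal_ofReal _)

theorem trace_cfc_mul_cfc (hA : A.IsHermitian) (hB : B.IsHermitian) (f g : ℝ → ℝ) :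
    (cfc f A * cfc g B).trace =
      ((∑ i, ∑ j, f (hA.eigenvalues i) * g (hB.eigenvalues j) *
        ‖((hA.eigenvectorUnitary : Matrix ι ι 𝕜)ᴴ * hB.eigenvectorUnitary) i j‖ ^ 2 : ℝ) : 𝕜) := by
  set U : Matrix ι ι 𝕜 := ↑hA.eigenvectorUnitary
  set W : Matrix ι ι 𝕜 := ↑hB.eigenvectorUnitary
  rw [hA.cfc_eq, hB.cfc_eq, IsHermitian.cfc, IsHermitian.cfc, Unitary.conjStarAlgAut_apply,
    Unitary.conjStarAlgAut_apply, ← trace_diagonal_mul_mul_diagonal_mul_conjTranspose]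
  set Df := diagonal ((RCLike.ofReal : ℝ → 𝕜) ∘ f ∘ hA.eigenvalues)
  set Dg := diagonal ((RCLike.ofReal : ℝ → 𝕜) ∘ g ∘ hB.eigenvalues)
  calc (U * Df * star U * (W * Dg * star W)).trace
      = (U * (Df * (Uᴴ * W * Dg * Wᴴ))).trace := by simp only [star_eq_conjTranspose, mul_assoc]
    _ = (Df * (Uᴴ * W * Dg * Wᴴ) * U).trace := trace_mul_comm _ _
    _ = (Df * (Uᴴ * W * Dg * (Uᴴ * W)ᴴ)).trace := by
      simp only [conjTranspose_mul, conjTranspose_conjTranspose, mul_assoc]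

/-- Klein's inequality. In the eigenbases of `A` and `B` every trace below becomes a sum weighted
by `‖(W* U) i j‖²`, and the inequality holds term by term by convexity of `exp`. -/
theorem re_trace_sub_mul_exp_le (hA : A.IsHermitian) (hB : B.IsHermitian) :
    RCLike.re ((B - A) * NormedSpace.exp A).trace ≤
      RCLike.re (NormedSpace.exp B).trace - RCLike.re (NormedSpace.exp A).trace := by
  have hA' := hA.isSelfAdjoint
  have hB' := hB.isSelfAdjoint
  have re_trace (f g : ℝ → ℝ) := (congrArg RCLike.re (hB.trace_cfc_mul_cfc hA f g)).trans
    (RCLike.ofReal_re _)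
  have hBA : (B - A) * NormedSpace.exp A =
      cfc (id : ℝ → ℝ) B * cfc Real.exp A - cfc (1 : ℝ → ℝ) B * cfc (fun x => x * Real.exp x) A := by
    rw [cfc_id ℝ B, cfc_one ℝ B, one_mul, cfc_mul (fun x => x) Real.exp A, cfc_id' ℝ A,
      ← hA.exp_eq_cfc, sub_mul]
  have hexpB : NormedSpace.exp B = cfc Real.exp B * cfc (1 : ℝ → ℝ) A := by
    rw [cfc_one ℝ A, mul_one, hB.exp_eq_cfc]
  have hexpA : NormedSpace.exp A = cfc (1 : ℝ → ℝ) B * cfc Real.exp A := by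
    rw [cfc_one ℝ B, one_mul, hA.exp_eq_cfc]
  rw [hBA, trace_sub, map_sub, re_trace, re_trace, hexpB, re_trace, hexpA, re_trace]
  simp only [← Finset.sum_sub_distrib]
  refine Finset.sum_le_sum fun i _ => Finset.sum_le_sum fun j _ => ?_
  simp only [id, Pi.one_apply, one_mul, mul_one]
  nlinarith [Real.sub_mul_exp_le_exp_sub_exp (hA.eigenvalues j) (hB.eigenvalues i),
    sq_nonneg ‖((hB.eigenvectorUnitary : Matrix ι ι 𝕜)ᴴ * hA.eigenvectorUnitary) i j‖]

end IsHermitian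

theorem re_trace_mul_exp_nonneg_of_unitary_conj {X M U : Matrix ι ι 𝕜} (hX : X.IsHermitian)
    (hU : U ∈ unitaryGroup ι 𝕜) {c : ℝ} (hc : 0 < c) (hUX : U * X * Uᴴ = X - c • M) :
    0 ≤ RCLike.re (M * exp X).trace := by
  have hUX' : (U * X * Uᴴ).IsHermitian := isHermitian_mul_mul_conjTranspose U hX
  have klein := hX.re_trace_sub_mul_exp_le hUX'
  rw [exp_unitary_conj hU, trace_unitary_conj hU, sub_self, hUX, sub_sub_cancel_left, neg_mul,
    smul_mul, trace_neg, trace_smul, map_neg, RCLike.smul_re, neg_nonpos] at klein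
  exact nonneg_of_mul_nonneg_right klein hc

theorem trace_mul_exp_eq_zero_of_unitary_conj {X M U : Matrix ι ι 𝕜} (hU : U ∈ unitaryGroup ι 𝕜)
    (hUX : U * X * Uᴴ = X) (hUM : U * M * Uᴴ = -M) : (M * exp X).trace = 0 := by
  have h := trace_mul_exp_unitary_conj hU M X
  rw [hUX, hUM, neg_mul, trace_neg, neg_eq_iff_add_eq_zero] at h
  exact add_self_eq_zero.mp h

end Matrix

open Matrix

/-- **Positivity of the magnetization.**
If `H₀`, `M` are Hermitian and a unitary `V` satisfies `V H₀ V* = H₀` and `V M V* = -M`,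
then for `β ≥ 0` and `h ≥ 0` the (unnormalized) Gibbs expectation of `M` is
nonnegative: `Tr(M exp(-β(H₀ - hM))) ≥ 0` (the trace is real and we take its real part). -/
theorem magnetization_nonneg {n : ℕ}
    (H₀ M : Matrix (Fin n) (Fin n) ℂ) (hH₀ : H₀.IsHermitian) (hM : M.IsHermitian)
    (V : Matrix (Fin n) (Fin n) ℂ) (hV : V ∈ Matrix.unitaryGroup (Fin n) ℂ)
    (hVH : V * H₀ * Vᴴ = H₀) (hVM : V * M * Vᴴ = -M)
    (β : ℝ) (hβ : 0 ≤ β) (h : ℝ) (hh : 0 ≤ h) :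
    0 ≤ (Matrix.trace (M * exp ((-β : ℂ) • (H₀ - (h : ℂ) • M)))).re := by
  set X := (-β : ℂ) • (H₀ - (h : ℂ) • M)
  have hX : X.IsHermitian := (hH₀.sub (hM.smul (Complex.conj_ofReal h))).smul
    (IsSelfAdjoint.neg (Complex.conj_ofReal β))
  have hVX : V * X * Vᴴ = X - (2 * β * h) • M := by
    simp only [X, Matrix.mul_smul, Matrix.smul_mul, mul_sub, sub_mul, hVH, hVM]
    module
  rcases (by positivity : 0 ≤ 2 * β * h).eq_or_lt with hβh | hβh
  · rw [← hβh, zero_smul, sub_zero] at hVX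
    simp [trace_mul_exp_eq_zero_of_unitary_conj hV hVX hVM]
  · exact re_trace_mul_exp_nonneg_of_unitary_conj hX hV hβh hVX
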